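/- In the bubbling calculus for the branch divisor: let $a \geq 1$, let $\gamma_1,\dots,\gamma_n \in \{1,\dots,a-1\}$ satisfy $\gamma_i + \gamma_j \leq a$ for all $i \neq j$, and let $\delta_1,\dots,\delta_m \in \{1,\dots,a\}$. Suppose $\sum_{i=1}^l \gamma_i - \sum_{j=1}^m \delta_j = ka$ for some integer $k$, with $m \geq 1$ and $l + m \geq 3$. Then $l + m - 2 - k > 0$. -/

import Mathlib

open Finset

/-! Fix one index `i₀`. The boundedness condition gives `γ_i ≤ a - γ_{i₀}` for every other
`i`, so `∑_{i ≤ l} γ_i ≤ γ_{i₀} + (l - 1)(a - γ_{i₀}) ≤ (l - 1) a - (l - 2)` once `l ≥ 2`,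
while `∑ γ_i ≤ l (a - 1)` for `l ≤ 1`. Since `∑ δ_j ≥ m`, in both cases
`k a = ∑ γ_i - ∑ δ_j < (l + m - 2) a`. -/

section PairwiseBoundedSum

variable {ι R : Type*} [CommRing R] [LinearOrder R] [IsStrictOrderedRing R]

theorem Finset.sum_le_add_card_sub_one_mul_of_add_le {s : Finset ι} {f : ι → R} {a : R}
    {i₀ : ι} (hi₀ : i₀ ∈ s) (h : ∀ i ∈ s, i ≠ i₀ → f i + f i₀ ≤ a) :
    ∑ i ∈ s, f i ≤ f i₀ + ((#s : R) - 1) * (a - f i₀) := by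
  classical
  rw [← add_sum_erase s f hi₀]
  gcongr
  calc ∑ i ∈ s.erase i₀, f i ≤ #(s.erase i₀) • (a - f i₀) :=
        sum_le_card_nsmul _ _ _ fun i hi ↦ by
          have := h i (mem_of_mem_erase hi) (ne_of_mem_erase hi); linarith
    _ = ((#s : R) - 1) * (a - f i₀) := by
        rw [nsmul_eq_mul, card_erase_of_mem hi₀,
          Nat.cast_pred (card_pos.mpr ⟨i₀, hi₀⟩)]

theorem Fintype.sum_le_of_one_le_of_pairwise_add_le [Fintype ι] {f : ι → R} {a : R}
    (hf : ∀ i, 1 ≤ f i) (hpair : Pairwise fun i j ↦ f i + f j ≤ a)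
    (hcard : 2 ≤ Fintype.card ι) :
    ∑ i, f i ≤ ((Fintype.card ι : R) - 1) * a - ((Fintype.card ι : R) - 2) := by
  obtain ⟨i₀⟩ : Nonempty ι := Fintype.card_pos_iff.mp (by omega)
  have hsum := sum_le_add_card_sub_one_mul_of_add_le (mem_univ i₀)
    fun i _ hi ↦ hpair hi
  have hcard' : (2 : R) ≤ Fintype.card ι := by exact_mod_cast hcard
  rw [card_univ] at hsum
  nlinarith [mul_nonneg (sub_nonneg.mpr hcard') (sub_nonneg.mpr (hf i₀))]

end PairwiseBoundedSum

theorem stmt7_general (a n m l : ℕ) (γ : Fin n → ℕ)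
    (hγ : ∀ i, 1 ≤ γ i ∧ γ i ≤ a - 1)
    (hbound : ∀ i j, i ≠ j → γ i + γ j ≤ a)
    (δ : Fin m → ℕ) (hδ : ∀ j, 1 ≤ δ j ∧ δ j ≤ a)
    (hl : l ≤ n) (k : ℤ)
    (hk : (∑ i : Fin l, (γ (Fin.castLE hl i) : ℤ)) - ∑ j, (δ j : ℤ) = k * a)
    (hm : 1 ≤ m) (hlm : 3 ≤ l + m) :
    0 < (l : ℤ) + m - 2 - k := by
  set g : Fin l → ℤ := fun i ↦ γ (Fin.castLE hl i)
  have hδsum : (m : ℤ) ≤ ∑ j, (δ j : ℤ) := by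
    simpa using card_nsmul_le_sum univ (fun j ↦ (δ j : ℤ)) 1 fun j _ ↦ by
      exact_mod_cast (hδ j).1
  have hγsum : ∑ i, g i < ((l : ℤ) + m - 2) * a + m := by
    rcases le_or_gt l 1 with hl1 | hl2
    · have hle : ∑ i, g i ≤ l * ((a : ℤ) - 1) := by
        simpa using sum_le_card_nsmul univ g ((a : ℤ) - 1) fun i _ ↦ by
          have := hγ (Fin.castLE hl i); simp only [g]; omega
      have hl1' : (l : ℤ) ≤ 1 := by exact_mod_cast hl1
      have hm2 : (2 : ℤ) ≤ m := by omega
      nlinarith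
    · have hle := Fintype.sum_le_of_one_le_of_pairwise_add_le (f := g) (a := (a : ℤ))
        (fun i ↦ by simp only [g]; exact_mod_cast (hγ (Fin.castLE hl i)).1)
        (fun i j hij ↦ by
          simp only [g]; exact_mod_cast hbound _ _ ((Fin.castLE_injective hl).ne hij))
        (by rw [Fintype.card_fin]; exact hl2)
      have hl2' : (2 : ℤ) ≤ l := by exact_mod_cast hl2
      rw [Fintype.card_fin] at hle
      nlinarith
  have hka : k * a < ((l : ℤ) + m - 2) * a := by linarith
  linarith [lt_of_mul_lt_mul_right hka (Int.natCast_nonneg a)]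

/-- The bubbling calculus inequality: with `1 ≤ γ_i ≤ a - 1` satisfying the
boundedness condition `γ_i + γ_j ≤ a` for `i ≠ j`, with `1 ≤ δ_j ≤ a`, and with
`∑_{i ≤ l} γ_i - ∑_j δ_j = k a`, `m ≥ 1`, `l + m ≥ 3`, one has
`l + m - 2 - k > 0`. -/
theorem stmt7 (a n m l : ℕ) (ha : 1 ≤ a) (γ : Fin n → ℕ)
    (hγ : ∀ i, 1 ≤ γ i ∧ γ i ≤ a - 1)
    (hbound : ∀ i j, i ≠ j → γ i + γ j ≤ a)
    (δ : Fin m → ℕ) (hδ : ∀ j, 1 ≤ δ j ∧ δ j ≤ a)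
    (hl : l ≤ n) (k : ℤ)
    (hk : (∑ i : Fin l, (γ (Fin.castLE hl i) : ℤ)) - ∑ j, (δ j : ℤ) = k * a)
    (hm : 1 ≤ m) (hlm : 3 ≤ l + m) :
    0 < (l : ℤ) + m - 2 - k :=
  stmt7_general a n m l γ hγ hbound δ hδ hl k hk hm hlm
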